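/- arXiv:2407.10669 — 2 statements merged into one kernel-verified Lean document; each statement's English description precedes it below -/
import Mathlib

section
/- Let $F : 2^{[n]} \to \mathbb{R}$ be monotone nondecreasing and let $\alpha : 2^{[n]} \to \mathbb{R}_{\geq 0}$ be modular, i.e., $\alpha(S) = \sum_{i \in S} \alpha(\{i\})$ for all $S$. Let $S_0 \subseteq [n]$ and let $S_1,\dots,S_m \subseteq [n]$ be pairwise disjoint and each disjoint from $S_0$, with each $S_k$ nonempty. Then $F([n]\setminus S_0) - \alpha([n]\setminus S_0) \leq \max\{F(S) - \alpha(S) : S \cap S_0 = \emptyset, \ S \cap S_k \neq \emptyset \text{ for all } k \in [m]\} \leq F([n]\setminus S_0) - \sum_{k=1}^{m} \min\{\alpha(\{j\}) : j \in S_k\}$. -/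
open scoped Classical in
theorem stmt3 {n m : ℕ} (F α : Finset (Fin n) → ℝ)
    (hF : ∀ S T : Finset (Fin n), S ⊆ T → F S ≤ F T)
    (hmod : ∀ S : Finset (Fin n), α S = ∑ i ∈ S, α {i})
    (hpos : ∀ i : Fin n, 0 ≤ α {i})
    (S0 : Finset (Fin n)) (Sk : Fin m → Finset (Fin n))
    (hSkne : ∀ k, (Sk k).Nonempty)
    (hdisj : ∀ k l, k ≠ l → Disjoint (Sk k) (Sk l))
    (hdisj0 : ∀ k, Disjoint (Sk k) S0)
    (hne : ((Finset.univ : Finset (Fin n)).powerset.filter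
      (fun S => Disjoint S S0 ∧ ∀ k, (S ∩ Sk k).Nonempty)).Nonempty) :
    F (Finset.univ \ S0) - α (Finset.univ \ S0) ≤
      (((Finset.univ : Finset (Fin n)).powerset.filter
        (fun S => Disjoint S S0 ∧ ∀ k, (S ∩ Sk k).Nonempty)).sup' hne
          (fun S => F S - α S)) ∧
    (((Finset.univ : Finset (Fin n)).powerset.filter
        (fun S => Disjoint S S0 ∧ ∀ k, (S ∩ Sk k).Nonempty)).sup' hne
          (fun S => F S - α S)) ≤
      F (Finset.univ \ S0) - ∑ k, (Sk k).inf' (hSkne k) (fun j => α {j}) := by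
  constructor
  · apply Finset.le_sup' (fun S => F S - α S)
    simp only [Finset.mem_filter, Finset.mem_powerset]
    refine ⟨Finset.subset_univ _, Finset.sdiff_disjoint, fun k => ?_⟩
    obtain ⟨j, hj⟩ := hSkne k
    exact ⟨j, Finset.mem_inter.2 ⟨Finset.mem_sdiff.2 ⟨Finset.mem_univ _,
      fun h => Finset.disjoint_left.1 (hdisj0 k) hj h⟩, hj⟩⟩
  · apply Finset.sup'_le
    intro S hS
    simp only [Finset.mem_filter, Finset.mem_powerset] at hS
    obtain ⟨-, hdS, hint⟩ := hS
    have hsub : S ⊆ Finset.univ \ S0 := fun x hx =>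
      Finset.mem_sdiff.2 ⟨Finset.mem_univ _, fun h => Finset.disjoint_left.1 hdS hx h⟩
    have h1 : F S ≤ F (Finset.univ \ S0) := hF _ _ hsub
    -- choose representatives
    choose j hj using fun k => hint k
    have hjS : ∀ k, j k ∈ S := fun k => (Finset.mem_inter.1 (hj k)).1
    have hjSk : ∀ k, j k ∈ Sk k := fun k => (Finset.mem_inter.1 (hj k)).2
    have hinj : Function.Injective j := by
      intro k l hkl
      by_contra h
      exact Finset.disjoint_left.1 (hdisj k l h) (hjSk k) (hkl ▸ hjSk l)
    have h2 : (∑ k, (Sk k).inf' (hSkne k) (fun j => α {j})) ≤ α S := by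
      calc (∑ k, (Sk k).inf' (hSkne k) (fun j => α {j}))
          ≤ ∑ k, α {j k} := Finset.sum_le_sum (fun k _ =>
            Finset.inf'_le _ (hjSk k))
        _ = ∑ i ∈ Finset.univ.image j, α {i} := by
            rw [Finset.sum_image (fun a _ b _ h => hinj h)]
        _ ≤ ∑ i ∈ S, α {i} := Finset.sum_le_sum_of_subset_of_nonneg
            (fun x hx => by
              obtain ⟨k, -, rfl⟩ := Finset.mem_image.1 hx
              exact hjS k)
            (fun i _ _ => hpos i)
        _ = α S := (hmod S).symm
    linarith
end

section
/- Let $Y$ be a nonempty finite set, $g : Y \times \Xi \to \mathbb{R}$, and $\xi^1,\dots,\xi^N$ elements of $\Xi$. Let $\{\Omega_1,\dots,\Omega_K\}$ and $\{\Omega'_1,\dots,\Omega'_{K'}\}$ be two partitions of $[N]$ into nonempty subsets such that the second partition refines the first. Then $\sum_{\ell=1}^{K} \frac{|\Omega_\ell|}{N} \max_{y \in Y} |\Omega_\ell|^{-1} \sum_{k \in \Omega_\ell} g(y,\xi^k) \leq \sum_{\ell=1}^{K'} \frac{|\Omega'_\ell|}{N} \max_{y \in Y} |\Omega'_\ell|^{-1}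 \sum_{k \in \Omega'_\ell} g(y,\xi^k)$. -/
theorem stmt19 {Ξ : Type*} {Y : Type*} [Fintype Y] [Nonempty Y]
    (g : Y → Ξ → ℝ)
    {N : ℕ} (hN : 0 < N) (ξ : Fin N → Ξ)
    {K K' : ℕ}
    (Ω₁ : Fin K → Finset (Fin N)) (Ω₂ : Fin K' → Finset (Fin N))
    (hne1 : ∀ l, (Ω₁ l).Nonempty) (hne2 : ∀ l, (Ω₂ l).Nonempty)
    (hdisj1 : ∀ l l', l ≠ l' → Disjoint (Ω₁ l) (Ω₁ l'))
    (hdisj2 : ∀ l l', l ≠ l' → Disjoint (Ω₂ l) (Ω₂ l'))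
    (hcov1 : ∀ k : Fin N, ∃ l, k ∈ Ω₁ l)
    (hcov2 : ∀ k : Fin N, ∃ l, k ∈ Ω₂ l)
    (hrefine : ∀ l', ∃ l, Ω₂ l' ⊆ Ω₁ l) :
    ∑ l, ((Ω₁ l).card : ℝ) / N *
        (⨆ y : Y, ((Ω₁ l).card : ℝ)⁻¹ * ∑ k ∈ Ω₁ l, g y (ξ k)) ≤
      ∑ l', ((Ω₂ l').card : ℝ) / N *
        (⨆ y : Y, ((Ω₂ l').card : ℝ)⁻¹ * ∑ k ∈ Ω₂ l', g y (ξ k)) := by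
  classical
  choose p hp using hrefine
  have hbdd : ∀ f : Y → ℝ, BddAbove (Set.range f) :=
    fun f => Set.Finite.bddAbove (Set.finite_range f)
  have hNpos : (0:ℝ) < N := by exact_mod_cast hN
  have hfiber : ∀ l : Fin K,
      Ω₁ l = (Finset.univ.filter (fun l' => p l' = l)).biUnion Ω₂ := by
    intro l
    ext k
    simp only [Finset.mem_biUnion, Finset.mem_filter, Finset.mem_univ, true_and]
    constructor
    · intro hk
      obtain ⟨l', hl'⟩ := hcov2 k
      refine ⟨l', ?_, hl'⟩
      by_contra hne
      exact Finset.disjoint_left.mp (hdisj1 _ _ hne) (hp l' hl') hk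
    · rintro ⟨l', rfl, hk⟩
      exact hp l' hk
  have key : ∀ l : Fin K,
      ((Ω₁ l).card : ℝ) / N *
          (⨆ y : Y, ((Ω₁ l).card : ℝ)⁻¹ * ∑ k ∈ Ω₁ l, g y (ξ k))
        ≤ ∑ l' ∈ Finset.univ.filter (fun l' => p l' = l),
            ((Ω₂ l').card : ℝ) / N *
              (⨆ y : Y, ((Ω₂ l').card : ℝ)⁻¹ * ∑ k ∈ Ω₂ l', g y (ξ k)) := by
    intro l
    have hc : (0:ℝ) < (Ω₁ l).card := by exact_mod_cast (hne1 l).card_pos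
    rw [Real.mul_iSup_of_nonneg (by positivity)]
    apply ciSup_le
    intro y
    have hdisj' : (↑(Finset.univ.filter (fun l' => p l' = l)) : Set (Fin K')).PairwiseDisjoint Ω₂ :=
      fun a _ b _ hab => hdisj2 a b hab
    have hsum : ∑ k ∈ Ω₁ l, g y (ξ k)
        = ∑ l' ∈ Finset.univ.filter (fun l' => p l' = l), ∑ k ∈ Ω₂ l', g y (ξ k) := by
      rw [hfiber l, Finset.sum_biUnion hdisj']
    calc ((Ω₁ l).card : ℝ) / N * (((Ω₁ l).card : ℝ)⁻¹ * ∑ k ∈ Ω₁ l, g y (ξ k))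
        = ∑ l' ∈ Finset.univ.filter (fun l' => p l' = l),
            ((Ω₂ l').card : ℝ) / N *
              (((Ω₂ l').card : ℝ)⁻¹ * ∑ k ∈ Ω₂ l', g y (ξ k)) := by
          have e0 : ((Ω₁ l).card : ℝ) / N * (((Ω₁ l).card : ℝ)⁻¹ * ∑ k ∈ Ω₁ l, g y (ξ k))
              = (∑ k ∈ Ω₁ l, g y (ξ k)) / N := by
            field_simp
          rw [e0, hsum, Finset.sum_div]
          refine Finset.sum_congr rfl (fun l' _ => ?_)
          have hc' : (0:ℝ) < (Ω₂ l').card := by exact_mod_cast (hne2 l').card_pos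
          field_simp
      _ ≤ ∑ l' ∈ Finset.univ.filter (fun l' => p l' = l),
            ((Ω₂ l').card : ℝ) / N *
              (⨆ y : Y, ((Ω₂ l').card : ℝ)⁻¹ * ∑ k ∈ Ω₂ l', g y (ξ k)) := by
          refine Finset.sum_le_sum (fun l' _ => ?_)
          exact mul_le_mul_of_nonneg_left (le_ciSup (hbdd fun y => ((Ω₂ l').card : ℝ)⁻¹ * ∑ k ∈ Ω₂ l', g y (ξ k)) y) (by positivity)
  calc ∑ l, ((Ω₁ l).card : ℝ) / N *
        (⨆ y : Y, ((Ω₁ l).card : ℝ)⁻¹ * ∑ k ∈ Ω₁ l, g y (ξ k))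
      ≤ ∑ l, ∑ l' ∈ Finset.univ.filter (fun l' => p l' = l),
          ((Ω₂ l').card : ℝ) / N *
            (⨆ y : Y, ((Ω₂ l').card : ℝ)⁻¹ * ∑ k ∈ Ω₂ l', g y (ξ k)) :=
        Finset.sum_le_sum (fun l _ => key l)
    _ = ∑ l', ((Ω₂ l').card : ℝ) / N *
          (⨆ y : Y, ((Ω₂ l').card : ℝ)⁻¹ * ∑ k ∈ Ω₂ l', g y (ξ k)) := by
        rw [← Finset.sum_fiberwise Finset.univ p
          (fun l' => ((Ω₂ l').card : ℝ) / N *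
            (⨆ y : Y, ((Ω₂ l').card : ℝ)⁻¹ * ∑ k ∈ Ω₂ l', g y (ξ k)))]
end
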